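/- arXiv:0908.2467 — 5 statements merged into one kernel-verified Lean document; each statement's English description precedes it below -/
import Mathlib

section
/- In the coloring graph Ĝ, every clique meets at most two sink subgraphs: if S is a set of vertices of Ĝ that are pairwise adjacent, then the number of indices j ∈ {1,…,t} with S ∩ V̂_j ≠ ∅ is at most 2. -/
/-! Between different sink subgraphs the only edges join a regular vertex to a fictitious one.
Hence in a clique, vertices from different sink subgraphs lie on different sides of the
regular/fictitious split, and since there are only two sides, at most two sink subgraphs occur. -/

/-- Vertex type of the coloring graph `Ĝ`: the sink subgraph `V̂_j` consists of
`nj j` regular vertices (`Sum.inl`) and `n - nj j` fictitious vertices (`Sum.inr`). -/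
abbrev ColoringVertex (t : ℕ) (nj : Fin t → ℕ) (n : ℕ) : Type :=
  (j : Fin t) × (Fin (nj j) ⊕ Fin (n - nj j))

/-- `cross R x y` holds when `x` is a regular vertex `v_{j,k}`, `y` is a fictitious
vertex of a different sink subgraph `V̂_{j'}`, and the contamination relation
`R j k j'` holds. -/
def cross {t n : ℕ} {nj : Fin t → ℕ} (R : (j : Fin t) → Fin (nj j) → Fin t → Prop)
    (x y : ColoringVertex t nj n) : Prop :=
  x.1 ≠ y.1 ∧ (∃ k : Fin (nj x.1), x.2 = Sum.inl k ∧ R x.1 k y.1) ∧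
    ∃ k' : Fin (n - nj y.1), y.2 = Sum.inr k'

/-- The coloring graph `Ĝ`: two distinct vertices in the same sink subgraph are
always adjacent; a regular vertex `v_{j,k}` is adjacent to every fictitious vertex
of `V̂_{j'}` (for `j' ≠ j`) iff `R j k j'`; there are no other adjacencies. -/
def coloringGraph (t n : ℕ) (nj : Fin t → ℕ)
    (R : (j : Fin t) → Fin (nj j) → Fin t → Prop) :
    SimpleGraph (ColoringVertex t nj n) where
  Adj x y := x ≠ y ∧ (x.1 = y.1 ∨ cross R x y ∨ cross R y x)
  symm := by
    constructor
    rintro x y ⟨h1, h2⟩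
    refine ⟨h1.symm, ?_⟩
    rcases h2 with h | h | h
    · exact Or.inl h.symm
    · exact Or.inr (Or.inr h)
    · exact Or.inr (Or.inl h)
  loopless := ⟨fun x h => h.1 rfl⟩

theorem Set.ncard_image_le_natCard_of_ne_imp_ne {V ι β : Type*} [Finite β] {S : Set V}
    {g : V → ι} (b : V → β) (h : ∀ x ∈ S, ∀ y ∈ S, g x ≠ g y → b x ≠ b y) :
    (g '' S).ncard ≤ Nat.card β := by
  rcases S.eq_empty_or_nonempty with rfl | ⟨x₀, -⟩
  · simp
  have : Nonempty V := ⟨x₀⟩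
  have hsec : ∀ i ∈ g '' S, Function.invFunOn g S i ∈ S ∧ g (Function.invFunOn g S i) = i :=
    fun i hi => ⟨Function.invFunOn_mem hi, Function.invFunOn_eq hi⟩
  rw [← Set.ncard_univ]
  refine Set.ncard_le_ncard_of_injOn (b ∘ Function.invFunOn g S) (fun _ _ => Set.mem_univ _)
    ?_ Set.finite_univ
  intro i hi j hj hij
  by_contra hne
  rw [← (hsec i hi).2, ← (hsec j hj).2] at hne
  exact h _ (hsec i hi).1 _ (hsec j hj).1 hne hij

theorem cross_isLeft {t n : ℕ} {nj : Fin t → ℕ} {R : (j : Fin t) → Fin (nj j) → Fin t → Prop}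
    {x y : ColoringVertex t nj n} (h : cross R x y) :
    x.2.isLeft = true ∧ y.2.isLeft = false := by
  obtain ⟨-, ⟨k, hx, -⟩, k', hy⟩ := h
  simp [hx, hy]

theorem coloringGraph_adj_isLeft_ne {t n : ℕ} {nj : Fin t → ℕ}
    {R : (j : Fin t) → Fin (nj j) → Fin t → Prop} {x y : ColoringVertex t nj n}
    (hadj : (coloringGraph t n nj R).Adj x y) (hsink : x.1 ≠ y.1) :
    x.2.isLeft ≠ y.2.isLeft := by
  rcases hadj.2 with hsame | hxy | hyx
  · exact absurd hsame hsink
  · simp [cross_isLeft hxy]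
  · simp [cross_isLeft hyx]

theorem clique_meets_at_most_two_sink_subgraphs_general
    (t n : ℕ) (nj : Fin t → ℕ)
    (R : (j : Fin t) → Fin (nj j) → Fin t → Prop)
    (S : Set (ColoringVertex t nj n))
    (hS : (coloringGraph t n nj R).IsClique S) :
    {j : Fin t | ∃ x ∈ S, x.1 = j}.ncard ≤ 2 := by
  have hsides : ∀ x ∈ S, ∀ y ∈ S, x.1 ≠ y.1 → x.2.isLeft ≠ y.2.isLeft := fun x hx y hy hsink =>
    coloringGraph_adj_isLeft_ne (hS hx hy fun hxy => hsink (congrArg Sigma.fst hxy)) hsink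
  calc {j : Fin t | ∃ x ∈ S, x.1 = j}.ncard = (Sigma.fst '' S).ncard := rfl
    _ ≤ Nat.card Bool := Set.ncard_image_le_natCard_of_ne_imp_ne _ hsides
    _ = 2 := by simp

/-- Every clique of the coloring graph `Ĝ` meets at most two sink subgraphs. -/
theorem clique_meets_at_most_two_sink_subgraphs
    (t n : ℕ) (ht : 1 ≤ t) (nj : Fin t → ℕ) (hnj : ∀ j, 1 ≤ nj j)
    (hn : n = Finset.univ.sup nj)
    (R : (j : Fin t) → Fin (nj j) → Fin t → Prop)
    (S : Set (ColoringVertex t nj n))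
    (hS : (coloringGraph t n nj R).IsClique S) :
    {j : Fin t | ∃ x ∈ S, x.1 = j}.ncard ≤ 2 :=
  clique_meets_at_most_two_sink_subgraphs_general t n nj R S hS
end

section
/- For any two distinct sinks j ≠ j', the maximum cardinality of a clique of Ĝ contained in V̂_j ∪ V̂_{j'} equals n + max(0, m_{j,j'} − n_{j'}, m_{j',j} − n_j). -/
/-!
Regular vertices of different sinks are never adjacent, and neither are fictitious ones. Hence an
edge of `Ĝ` between `V̂_j` and `V̂_{j'}` joins a regular vertex of one sink to a fictitious vertex
of the other, and a clique meeting both sinks, say through `v_{j,k}` and a fictitious vertex of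
`V̂_{j'}`, consists of regular vertices `v_{j,k'}` with `R j k' j'` and fictitious vertices of
`V̂_{j'}`. So every clique in `V̂_j ∪ V̂_{j'}` lies in one of four cliques, of sizes `n`, `n`,
`m_{j,j'} + (n - n_{j'})` and `m_{j',j} + (n - n_j)`, and the largest of these is the bound.
-/
section

variable {t n : ℕ} {nj : Fin t → ℕ} {R : (j : Fin t) → Fin (nj j) → Fin t → Prop} {j j' : Fin t}
  {S : Set (ColoringVertex t nj n)}

def sinkSubgraph (j : Fin t) : Set (ColoringVertex t nj n) :=
  Set.range (Sigma.mk j)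

variable (R) in
def contaminationClique (j j' : Fin t) : Set (ColoringVertex t nj n) :=
  Sigma.mk j '' (Sum.inl '' {k | R j k j'}) ∪ Sigma.mk j' '' Set.range Sum.inr

lemma mem_sinkSubgraph {x : ColoringVertex t nj n} : x ∈ sinkSubgraph j ↔ x.1 = j := by
  obtain ⟨i, s⟩ := x
  simp [sinkSubgraph, eq_comm]

lemma coloringGraph_adj_of_fst_ne {x y : ColoringVertex t nj n} (h : x.1 ≠ y.1) :
    (coloringGraph t n nj R).Adj x y ↔ cross R x y ∨ cross R y x := by
  have hne : x ≠ y := fun hxy => h (congrArg Sigma.fst hxy)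
  simp [coloringGraph, h, hne]

lemma coloringGraph_adj_inl_iff (hjj' : j ≠ j') (k : Fin (nj j))
    (s : Fin (nj j') ⊕ Fin (n - nj j')) :
    (coloringGraph t n nj R).Adj ⟨j, .inl k⟩ ⟨j', s⟩ ↔ R j k j' ∧ s.isRight := by
  rw [coloringGraph_adj_of_fst_ne hjj']
  cases s <;> simp [cross, hjj', hjj'.symm]

lemma coloringGraph_not_adj_inr_inr (hjj' : j ≠ j') (k : Fin (n - nj j))
    (k' : Fin (n - nj j')) :
    ¬ (coloringGraph t n nj R).Adj ⟨j, .inr k⟩ ⟨j', .inr k'⟩ := by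
  rw [coloringGraph_adj_of_fst_ne hjj']
  simp [cross]

lemma ncard_sinkSubgraph (hj : nj j ≤ n) :
    (sinkSubgraph j : Set (ColoringVertex t nj n)).ncard = n := by
  rw [sinkSubgraph, Set.ncard_range_of_injective sigma_mk_injective, Nat.card_sum]
  simp only [Nat.card_eq_fintype_card, Fintype.card_fin]
  omega

lemma ncard_contaminationClique (hjj' : j ≠ j') :
    (contaminationClique R j j' : Set (ColoringVertex t nj n)).ncard =
      {k | R j k j'}.ncard + (n - nj j') := by
  have hdisj : Disjoint (Sigma.mk j '' (Sum.inl '' {k | R j k j'}))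
      (Sigma.mk (β := fun i => Fin (nj i) ⊕ Fin (n - nj i)) j' '' Set.range Sum.inr) := by
    rw [Set.disjoint_left]
    rintro _ ⟨_, -, rfl⟩ ⟨_, -, h⟩
    exact hjj' (congrArg Sigma.fst h).symm
  rw [contaminationClique, Set.ncard_union_eq hdisj,
    Set.ncard_image_of_injective _ sigma_mk_injective,
    Set.ncard_image_of_injective _ Sum.inl_injective,
    Set.ncard_image_of_injective _ sigma_mk_injective,
    Set.ncard_range_of_injective Sum.inr_injective, Nat.card_eq_fintype_card, Fintype.card_fin]

lemma fst_eq_or_eq_of_mem_contaminationClique {x : ColoringVertex t nj n}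
    (hx : x ∈ contaminationClique R j j') : x.1 = j ∨ x.1 = j' := by
  rcases hx with ⟨_, -, rfl⟩ | ⟨_, -, rfl⟩
  exacts [Or.inl rfl, Or.inr rfl]

lemma isClique_sinkSubgraph (j : Fin t) :
    (coloringGraph t n nj R).IsClique (sinkSubgraph j) := by
  rintro _ ⟨s, rfl⟩ _ ⟨s', rfl⟩ hne
  exact ⟨hne, Or.inl rfl⟩

lemma isClique_contaminationClique (hjj' : j ≠ j') :
    (coloringGraph t n nj R).IsClique (contaminationClique R j j') := by
  have hcross : ∀ k ∈ {k | R j k j'}, ∀ k' : Fin (n - nj j'),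
      (coloringGraph t n nj R).Adj ⟨j, .inl k⟩ ⟨j', .inr k'⟩ := fun k hk k' =>
    (coloringGraph_adj_inl_iff hjj' k _).2 ⟨hk, rfl⟩
  rintro _ (⟨_, ⟨k, hk, rfl⟩, rfl⟩ | ⟨_, ⟨k, rfl⟩, rfl⟩) _
    (⟨_, ⟨k', hk', rfl⟩, rfl⟩ | ⟨_, ⟨k', rfl⟩, rfl⟩) hne
  · exact ⟨hne, Or.inl rfl⟩
  · exact hcross k hk k'
  · exact (hcross k' hk' k).symm
  · exact ⟨hne, Or.inl rfl⟩


lemma SimpleGraph.IsClique.subset_contaminationClique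
    (hS : (coloringGraph t n nj R).IsClique S) (hsub : ∀ x ∈ S, x.1 = j ∨ x.1 = j')
    (hjj' : j ≠ j') {k : Fin (nj j)} {k' : Fin (n - nj j')}
    (hk : ⟨j, .inl k⟩ ∈ S) (hk' : ⟨j', .inr k'⟩ ∈ S) :
    S ⊆ contaminationClique R j j' := by
  rintro ⟨i, s⟩ hz
  rcases hsub _ hz with rfl | rfl
  · cases s with
    | inl l =>
      have hadj := hS hz hk' (ne_of_apply_ne Sigma.fst hjj')
      exact Or.inl ⟨_, ⟨l, ((coloringGraph_adj_inl_iff hjj' l _).1 hadj).1, rfl⟩, rfl⟩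
    | inr l =>
      exact absurd (hS hz hk' (ne_of_apply_ne Sigma.fst hjj'))
        (coloringGraph_not_adj_inr_inr hjj' l k')
  · cases s with
    | inl l =>
      have := (coloringGraph_adj_inl_iff hjj'.symm l _).1
        (hS hz hk (ne_of_apply_ne Sigma.fst hjj'.symm))
      simp at this
    | inr l => exact Or.inr ⟨_, ⟨l, rfl⟩, rfl⟩

lemma SimpleGraph.IsClique.subset_sinkSubgraph_or_subset_contaminationClique
    (hS : (coloringGraph t n nj R).IsClique S) (hsub : ∀ x ∈ S, x.1 = j ∨ x.1 = j')
    (hjj' : j ≠ j') :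
    S ⊆ sinkSubgraph j ∨ S ⊆ sinkSubgraph j' ∨
      S ⊆ contaminationClique R j j' ∨ S ⊆ contaminationClique R j' j := by
  by_cases hj : ∀ x ∈ S, x.1 = j
  · exact Or.inl fun x hx => mem_sinkSubgraph.2 (hj x hx)
  by_cases hj' : ∀ x ∈ S, x.1 = j'
  · exact Or.inr (Or.inl fun x hx => mem_sinkSubgraph.2 (hj' x hx))
  push Not at hj hj'
  obtain ⟨⟨i, s⟩, hx, hxj⟩ := hj
  obtain ⟨⟨i', s'⟩, hy, hyj'⟩ := hj'
  obtain rfl : j' = i := ((hsub _ hx).resolve_left hxj).symm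
  obtain rfl : j = i' := ((hsub _ hy).resolve_right hyj').symm
  have hadj := hS hy hx (ne_of_apply_ne Sigma.fst hjj')
  cases s' with
  | inl k =>
    cases s with
    | inl k' => simp [coloringGraph_adj_inl_iff hjj'] at hadj
    | inr k' => exact Or.inr (Or.inr (Or.inl (hS.subset_contaminationClique hsub hjj' hy hx)))
  | inr k =>
    cases s with
    | inl k' =>
      have hsub' : ∀ x ∈ S, x.1 = j' ∨ x.1 = j := fun x hx => (hsub x hx).symm
      exact Or.inr (Or.inr (Or.inr (hS.subset_contaminationClique hsub' hjj'.symm hx hy)))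
    | inr k' => exact absurd hadj (coloringGraph_not_adj_inr_inr hjj' k k')

end

theorem max_clique_in_pair_of_sink_subgraphs_general
    (t n : ℕ) (nj : Fin t → ℕ)
    (hn : n = Finset.univ.sup nj)
    (R : (j : Fin t) → Fin (nj j) → Fin t → Prop)
    (j j' : Fin t) (hjj' : j ≠ j') :
    IsGreatest
      {c : ℕ | ∃ S : Set (ColoringVertex t nj n),
        (coloringGraph t n nj R).IsClique S ∧ (∀ x ∈ S, x.1 = j ∨ x.1 = j') ∧
        S.ncard = c}
      (n + max ({k : Fin (nj j) | R j k j'}.ncard - nj j')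
               ({k : Fin (nj j') | R j' k j}.ncard - nj j)) := by
  set m := {k : Fin (nj j) | R j k j'}.ncard
  set m' := {k : Fin (nj j') | R j' k j}.ncard
  have hj : nj j ≤ n := hn ▸ Finset.le_sup (Finset.mem_univ j)
  have hj' : nj j' ≤ n := hn ▸ Finset.le_sup (Finset.mem_univ j')
  have hsink := ncard_sinkSubgraph (n := n) hj
  have hsink' := ncard_sinkSubgraph (n := n) hj'
  have hcont := ncard_contaminationClique (n := n) (R := R) hjj'
  have hcont' := ncard_contaminationClique (n := n) (R := R) hjj'.symm
  constructor
  · obtain h | h | h : n + max (m - nj j') (m' - nj j) = n ∨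
        n + max (m - nj j') (m' - nj j) = m + (n - nj j') ∨
        n + max (m - nj j') (m' - nj j) = m' + (n - nj j) := by
      omega
    · exact ⟨_, isClique_sinkSubgraph j, fun x hx => Or.inl (mem_sinkSubgraph.1 hx),
        hsink.trans h.symm⟩
    · exact ⟨_, isClique_contaminationClique hjj',
        fun x hx => fst_eq_or_eq_of_mem_contaminationClique hx, hcont.trans h.symm⟩
    · exact ⟨_, isClique_contaminationClique hjj'.symm,
        fun x hx => (fst_eq_or_eq_of_mem_contaminationClique hx).symm, hcont'.trans h.symm⟩
  · rintro _ ⟨S, hS, hsub, rfl⟩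
    rcases hS.subset_sinkSubgraph_or_subset_contaminationClique hsub hjj' with h | h | h | h <;>
      have := Set.ncard_le_ncard h <;> omega

/-- For distinct sinks `j ≠ j'`, the maximum cardinality of a clique of `Ĝ`
contained in `V̂_j ∪ V̂_{j'}` equals `n + max (0) (m_{j,j'} - n_{j'}) (m_{j',j} - n_j)`
(the outer `max 0 ⬝` is automatic from truncated `ℕ`-subtraction). -/
theorem max_clique_in_pair_of_sink_subgraphs
    (t n : ℕ) (ht : 1 ≤ t) (nj : Fin t → ℕ) (hnj : ∀ j, 1 ≤ nj j)
    (hn : n = Finset.univ.sup nj)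
    (R : (j : Fin t) → Fin (nj j) → Fin t → Prop)
    (j j' : Fin t) (hjj' : j ≠ j') :
    IsGreatest
      {c : ℕ | ∃ S : Set (ColoringVertex t nj n),
        (coloringGraph t n nj R).IsClique S ∧ (∀ x ∈ S, x.1 = j ∨ x.1 = j') ∧
        S.ncard = c}
      (n + max ({k : Fin (nj j) | R j k j'}.ncard - nj j')
               ({k : Fin (nj j') | R j' k j}.ncard - nj j)) :=
  max_clique_in_pair_of_sink_subgraphs_general t n nj hn R j j' hjj'
end

section
/- The coloring graph Ĝ admits a proper coloring using n colors if and only if there exists a saturating decodable stream assignment. Moreover, if c is any proper n-coloring of Ĝ, then the function f defined by f(j,k) = c(v_{j,k}) is a saturating decodable stream assignment. -/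
/-- A saturating decodable stream assignment: each path `(j,k)` gets a stream in
`{1,…,n}` (modelled as `Fin n`), such that distinct paths to the same sink get
distinct streams (saturation), and whenever path `k` to sink `j` contaminates onto
some path to a different sink `j'`, some path to `j'` is assigned the same stream
(decodability). -/
def IsSatDecodable (t n : ℕ) (nj : Fin t → ℕ)
    (R : (j : Fin t) → Fin (nj j) → Fin t → Prop)
    (f : (j : Fin t) → Fin (nj j) → Fin n) : Prop :=
  (∀ j, Function.Injective (f j)) ∧
    ∀ (j j' : Fin t) (k : Fin (nj j)), j ≠ j' → R j k j' →
      ∃ k' : Fin (nj j'), f j' k' = f j k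

/-!
Each sink subgraph `V̂_j` is a clique on exactly `n` vertices, so a proper `n`-coloring restricts
to a bijection `V̂_j ≃ Fin n`. Saturation is injectivity on the regular vertices. If `R j k j'`,
the color of `v_{j,k}` is taken by some vertex of `V̂_{j'}`; it cannot be a fictitious one, as
those are adjacent to `v_{j,k}`, so it is a regular vertex `v_{j',k'}`: this is decodability.
Conversely, a saturating decodable `f` colors the fictitious vertices of `V̂_j` by the streams
missing from the image of `f j`; a fictitious vertex of `V̂_{j'}` then never shares its color with
a regular vertex `v_{j,k}` with `R j k j'`, since decodability puts `f j k` in the image of `f j'`.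
-/

theorem Function.Injective.exists_sumEquiv_extend {ι β α : Type*} [Fintype ι] [Fintype β]
    [Fintype α] {f : ι → α} (hf : f.Injective)
    (hβ : Fintype.card β = Fintype.card α - Fintype.card ι) :
    ∃ e : ι ⊕ β ≃ α, ∀ i, e (Sum.inl i) = f i := by
  classical
  have hcard : Fintype.card β = Fintype.card ↑(Set.range f)ᶜ := by
    rw [Fintype.card_compl_set, Set.card_range_of_injective hf, hβ]
  refine ⟨(Equiv.sumCongr (Equiv.ofInjective f hf) (Fintype.equivOfCardEq hcard)).trans
    (Equiv.Set.sumCompl _), fun i => rfl⟩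

namespace coloringGraph

variable {t n : ℕ} {nj : Fin t → ℕ} {R : (j : Fin t) → Fin (nj j) → Fin t → Prop}

theorem adj_of_fst_eq {x y : ColoringVertex t nj n} (hne : x ≠ y) (h : x.1 = y.1) :
    (coloringGraph t n nj R).Adj x y :=
  ⟨hne, Or.inl h⟩

theorem adj_inl_inr {j j' : Fin t} {k : Fin (nj j)} (k' : Fin (n - nj j')) (hjj' : j ≠ j')
    (hR : R j k j') :
    (coloringGraph t n nj R).Adj ⟨j, Sum.inl k⟩ ⟨j', Sum.inr k'⟩ :=
  ⟨fun h => hjj' (congrArg Sigma.fst h), Or.inr (Or.inl ⟨hjj', ⟨k, rfl, hR⟩, k', rfl⟩)⟩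

theorem coloring_injective_on_sink {α : Type*} (c : (coloringGraph t n nj R).Coloring α)
    (j : Fin t) : Function.Injective fun x => c ⟨j, x⟩ := by
  intro x y hxy
  by_contra hne
  have hadj : (coloringGraph t n nj R).Adj ⟨j, x⟩ ⟨j, y⟩ :=
    adj_of_fst_eq (fun h => hne (by simpa using h)) rfl
  exact c.valid hadj hxy

theorem coloring_bijective_on_sink (c : (coloringGraph t n nj R).Coloring (Fin n)) {j : Fin t}
    (hj : nj j ≤ n) : Function.Bijective fun x => c ⟨j, x⟩ :=
  (Fintype.bijective_iff_injective_and_card _).2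
    ⟨coloring_injective_on_sink c j, by simp [Nat.add_sub_cancel' hj]⟩

theorem isSatDecodable_of_coloring (hle : ∀ j, nj j ≤ n)
    (c : (coloringGraph t n nj R).Coloring (Fin n)) :
    IsSatDecodable t n nj R fun j k => c ⟨j, Sum.inl k⟩ := by
  refine ⟨fun j => (coloring_injective_on_sink c j).comp Sum.inl_injective, ?_⟩
  intro j j' k hjj' hR
  obtain ⟨x, hx⟩ := (coloring_bijective_on_sink c (hle j')).2 (c ⟨j, Sum.inl k⟩)
  cases x with
  | inl k' => exact ⟨k', hx⟩
  | inr k' => exact absurd hx.symm (c.valid (adj_inl_inr k' hjj' hR))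

def coloringOfSinkEquiv (e : ∀ j, Fin (nj j) ⊕ Fin (n - nj j) ≃ Fin n)
    (hdec : ∀ (j j' : Fin t) (k : Fin (nj j)), j ≠ j' → R j k j' →
      ∃ k' : Fin (nj j'), e j' (Sum.inl k') = e j (Sum.inl k)) :
    (coloringGraph t n nj R).Coloring (Fin n) := by
  have hcross : ∀ j j' x y, cross R ⟨j, x⟩ ⟨j', y⟩ → e j x ≠ e j' y := by
    rintro j j' (k | _) (_ | k') ⟨hjj', ⟨_, hk, hR⟩, _, hk'⟩ <;> cases hk <;> cases hk'
    obtain ⟨k'', hk''⟩ := hdec j j' k hjj' hR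
    rw [← hk'']
    exact fun h => Sum.inl_ne_inr ((e j').injective h)
  refine SimpleGraph.Coloring.mk (fun x => e x.1 x.2) ?_
  rintro ⟨j, x⟩ ⟨j', y⟩ ⟨hne, hsame | hxy | hyx⟩
  · obtain rfl : j = j' := hsame
    exact fun h => hne (congrArg _ ((e j).injective h))
  · exact hcross _ _ _ _ hxy
  · exact (hcross _ _ _ _ hyx).symm

theorem colorable_of_isSatDecodable {f : (j : Fin t) → Fin (nj j) → Fin n}
    (hf : IsSatDecodable t n nj R f) : (coloringGraph t n nj R).Colorable n := by
  choose e he using fun j => (hf.1 j).exists_sumEquiv_extend (β := Fin (n - nj j)) (by simp)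
  refine ⟨coloringOfSinkEquiv e fun j j' k hjj' hR => ?_⟩
  obtain ⟨k', hk'⟩ := hf.2 j j' k hjj' hR
  exact ⟨k', by rw [he, he, hk']⟩

end coloringGraph

open coloringGraph in
theorem colorable_iff_exists_satDecodable_general
    (t n : ℕ) (nj : Fin t → ℕ)
    (hn : n = Finset.univ.sup nj)
    (R : (j : Fin t) → Fin (nj j) → Fin t → Prop) :
    ((coloringGraph t n nj R).Colorable n ↔
      ∃ f : (j : Fin t) → Fin (nj j) → Fin n, IsSatDecodable t n nj R f) ∧
    ∀ c : (coloringGraph t n nj R).Coloring (Fin n),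
      IsSatDecodable t n nj R (fun j k => c ⟨j, Sum.inl k⟩) := by
  have hle : ∀ j, nj j ≤ n := fun j => hn ▸ Finset.le_sup (Finset.mem_univ j)
  exact ⟨⟨fun ⟨c⟩ => ⟨_, isSatDecodable_of_coloring hle c⟩,
    fun ⟨_, hf⟩ => colorable_of_isSatDecodable hf⟩, isSatDecodable_of_coloring hle⟩

/-- `Ĝ` admits a proper `n`-coloring iff a saturating decodable stream assignment
exists; moreover any proper `n`-coloring `c` of `Ĝ` yields the saturating decodable
stream assignment `(j,k) ↦ c (v_{j,k})`. -/
theorem colorable_iff_exists_satDecodable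
    (t n : ℕ) (ht : 1 ≤ t) (nj : Fin t → ℕ) (hnj : ∀ j, 1 ≤ nj j)
    (hn : n = Finset.univ.sup nj)
    (R : (j : Fin t) → Fin (nj j) → Fin t → Prop) :
    ((coloringGraph t n nj R).Colorable n ↔
      ∃ f : (j : Fin t) → Fin (nj j) → Fin n, IsSatDecodable t n nj R f) ∧
    ∀ c : (coloringGraph t n nj R).Coloring (Fin n),
      IsSatDecodable t n nj R (fun j k => c ⟨j, Sum.inl k⟩) :=
  colorable_iff_exists_satDecodable_general t n nj hn R
end

section
/- The graph Ĥ admits a proper n-coloring if and only if the constructed stream-assignment instance admits a saturating decodable stream assignment. -/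
/-- Paths of the constructed stream-assignment instance: each edge sink `e` owns two
paths `p_{e,1}, p_{e,2}` (`Sum.inl (e, 0)` and `Sum.inl (e, 1)`), each vertex sink
`u` owns the single path `p_u` (`Sum.inr (Sum.inl u)`), and the extra sink `⋆` owns
`n` paths (`Sum.inr (Sum.inr i)`). -/
abbrev RedPath {V : Type*} (H : SimpleGraph V) (n : ℕ) : Type _ :=
  (H.edgeSet × Fin 2) ⊕ V ⊕ Fin n

/-- Sinks of the constructed instance: the edges of `Ĥ`, the vertices of `Ĥ`, and
one extra sink `⋆`. -/
abbrev RedSink {V : Type*} (H : SimpleGraph V) : Type _ :=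
  H.edgeSet ⊕ V ⊕ Unit

/-- The sink owning a given path. -/
def redOwner {V : Type*} (H : SimpleGraph V) (n : ℕ) :
    RedPath H n → RedSink H
  | Sum.inl (e, _) => Sum.inl e
  | Sum.inr (Sum.inl u) => Sum.inr (Sum.inl u)
  | Sum.inr (Sum.inr _) => Sum.inr (Sum.inr ())

/-- The link set of a path, given an orientation `fo` assigning to each edge `e` the
ordered pair `(v_e, w_e)` of its endpoints: `p_{e,1}` has link set `{v_e}`, `p_{e,2}`
has link set `{w_e}`, `p_u` has link set `{u}`, and the paths to `⋆` have empty link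
sets. -/
def redLinks {V : Type*} (H : SimpleGraph V) (n : ℕ) (fo : H.edgeSet → V × V) :
    RedPath H n → Set V
  | Sum.inl (e, i) => if i = 0 then {(fo e).1} else {(fo e).2}
  | Sum.inr (Sum.inl u) => {u}
  | Sum.inr (Sum.inr _) => ∅

/-- The contamination relation: path `p` contaminates onto sink `j'` iff `j'` does
not own `p` and the link set of `p` meets the link set of some path to `j'`. -/
def redContam {V : Type*} (H : SimpleGraph V) (n : ℕ) (fo : H.edgeSet → V × V)
    (p : RedPath H n) (j' : RedSink H) : Prop :=
  redOwner H n p ≠ j' ∧ ∃ q : RedPath H n, redOwner H n q = j' ∧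
    (redLinks H n fo p ∩ redLinks H n fo q).Nonempty

/-- A saturating decodable stream assignment for the constructed instance:
distinct paths to the same sink get distinct streams in `{1,…,n}` (saturation), and
whenever `p` contaminates onto sink `j'`, some path to `j'` carries the stream of
`p` (decodability). -/
def RedSatDecodable {V : Type*} (H : SimpleGraph V) (n : ℕ)
    (fo : H.edgeSet → V × V) (f : RedPath H n → Fin n) : Prop :=
  (∀ p q : RedPath H n, redOwner H n p = redOwner H n q → p ≠ q → f p ≠ f q) ∧
    ∀ (p : RedPath H n) (j' : RedSink H), redContam H n fo p j' →
      ∃ q : RedPath H n, redOwner H n q = j' ∧ f q = f p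

def fwdF {V : Type*} (H : SimpleGraph V) (n : ℕ) (fo : H.edgeSet → V × V)
    (c : V → Fin n) : RedPath H n → Fin n
  | Sum.inl (e, i) => if i = 0 then c (fo e).1 else c (fo e).2
  | Sum.inr (Sum.inl u) => c u
  | Sum.inr (Sum.inr i) => i

theorem fwdF_key {V : Type*} (H : SimpleGraph V) (n : ℕ) (fo : H.edgeSet → V × V)
    (c : V → Fin n) (r : RedPath H n) (x : V) (hx : x ∈ redLinks H n fo r) :
    fwdF H n fo c r = c x := by
  rcases r with ⟨e, i⟩ | u | i
  · fin_cases i <;> simp_all [redLinks, fwdF]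
  · simp_all [redLinks, fwdF]
  · simp [redLinks] at hx

theorem red_owner_vertex {V : Type*} (H : SimpleGraph V) (n : ℕ) (q : RedPath H n)
    (u : V) (hq : redOwner H n q = Sum.inr (Sum.inl u)) : q = Sum.inr (Sum.inl u) := by
  rcases q with ⟨e', i⟩ | u' | i <;>
    simp only [redOwner, reduceCtorEq, Sum.inr.injEq, Sum.inl.injEq] at hq
  rw [hq]

/-- `Ĥ` admits a proper `n`-coloring iff the constructed stream-assignment instance
admits a saturating decodable stream assignment. -/
theorem proper_coloring_iff_redSatDecodable
    (V : Type*) [Fintype V] (H : SimpleGraph V) (n : ℕ) (hn : 2 ≤ n)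
    (fo : H.edgeSet → V × V)
    (hfo : ∀ e : H.edgeSet, (e : Sym2 V) = s((fo e).1, (fo e).2)) :
    (∃ c : V → Fin n, ∀ a b : V, H.Adj a b → c a ≠ c b) ↔
      ∃ f : RedPath H n → Fin n, RedSatDecodable H n fo f := by
  constructor
  · rintro ⟨c, hc⟩
    refine ⟨fwdF H n fo c, ?_, ?_⟩
    · rintro (⟨e, i⟩ | u | i) (⟨e', i'⟩ | u' | i') how hne <;>
        simp only [redOwner, reduceCtorEq, Sum.inl.injEq, Sum.inr.injEq] at how
      · subst how
        have hii : i ≠ i' := fun h => hne (by rw [h])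
        have hadj : H.Adj (fo e).1 (fo e).2 := by
          have := e.2
          rw [hfo e] at this
          exact this
        fin_cases i <;> fin_cases i' <;> simp_all [fwdF] <;>
          first
            | exact hc _ _ hadj
            | exact hc _ _ hadj.symm
            | exact fun h => hc _ _ hadj h.symm
            | exact fun h => hc _ _ hadj.symm h.symm
      · subst how; exact absurd rfl hne
      · simp only [fwdF]
        exact fun h => hne (by rw [show i = i' from h])
    · rintro p j' ⟨hne, q, hq, x, hxp, hxq⟩
      exact ⟨q, hq, by rw [fwdF_key H n fo c q x hxq, fwdF_key H n fo c p x hxp]⟩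
  · rintro ⟨f, hs, hd⟩
    refine ⟨fun u => f (Sum.inr (Sum.inl u)), fun a b hab => ?_⟩
    have claim : ∀ (e : H.edgeSet) (i : Fin 2) (x : V),
        x ∈ redLinks H n fo (Sum.inl (e, i)) →
        f (Sum.inl (e, i)) = f (Sum.inr (Sum.inl x)) := by
      intro e i x hx
      have hcon : redContam H n fo (Sum.inl (e, i)) (Sum.inr (Sum.inl x)) := by
        refine ⟨by simp [redOwner], Sum.inr (Sum.inl x), rfl, x, hx, ?_⟩
        simp [redLinks]
      obtain ⟨q, hq, hfq⟩ := hd _ _ hcon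
      rw [red_owner_vertex H n q x hq] at hfq
      exact hfq.symm
    set e : H.edgeSet := ⟨s(a, b), hab⟩ with he
    have h01 : f (Sum.inl (e, 0)) ≠ f (Sum.inl (e, 1)) :=
      hs _ _ rfl (by simp)
    have h0 : f (Sum.inl (e, 0)) = f (Sum.inr (Sum.inl (fo e).1)) :=
      claim e 0 _ (by simp [redLinks])
    have h1 : f (Sum.inl (e, 1)) = f (Sum.inr (Sum.inl (fo e).2)) :=
      claim e 1 _ (by simp [redLinks])
    have hvw : s((fo e).1, (fo e).2) = s(a, b) := (hfo e).symm
    rw [Sym2.eq_iff] at hvw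
    rw [h0, h1] at h01
    rcases hvw with ⟨h1', h2'⟩ | ⟨h1', h2'⟩
    · rw [h1', h2'] at h01; exact h01
    · rw [h1', h2'] at h01; exact fun h => h01 h.symm
end

section
/- For any saturating decodable stream assignment f of the constructed instance and every vertex u ∈ V̂, every path whose link set contains u is assigned the same stream as the single path p_u to sink u; in particular, for every edge e ∈ Ê, f(p_{e,1}) = f(p_{v_e}) and f(p_{e,2}) = f(p_{w_e}). -/
/-- For any saturating decodable stream assignment `f` of the constructed instance
and every vertex `u`, every path whose link set contains `u` carries the same stream
as the single path `p_u` to sink `u`; in particular `f(p_{e,1}) = f(p_{v_e})` and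
`f(p_{e,2}) = f(p_{w_e})` for every edge `e`. -/
theorem redSatDecodable_constant_on_links
    (V : Type*) [Fintype V] (H : SimpleGraph V) (n : ℕ) (hn : 2 ≤ n)
    (fo : H.edgeSet → V × V)
    (hfo : ∀ e : H.edgeSet, (e : Sym2 V) = s((fo e).1, (fo e).2))
    (f : RedPath H n → Fin n) (hf : RedSatDecodable H n fo f) :
    (∀ (u : V) (p : RedPath H n), u ∈ redLinks H n fo p →
        f p = f (Sum.inr (Sum.inl u))) ∧
      ∀ e : H.edgeSet,
        f (Sum.inl (e, 0)) = f (Sum.inr (Sum.inl (fo e).1)) ∧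
        f (Sum.inl (e, 1)) = f (Sum.inr (Sum.inl (fo e).2)) := by
  have key : ∀ (u : V) (p : RedPath H n), u ∈ redLinks H n fo p →
      f p = f (Sum.inr (Sum.inl u)) := by
    intro u p hu
    match p with
    | Sum.inr (Sum.inl v) =>
      simp [redLinks] at hu; subst hu; rfl
    | Sum.inr (Sum.inr i) => simp [redLinks] at hu
    | Sum.inl (e, i) =>
      have hc : redContam H n fo (Sum.inl (e, i)) (Sum.inr (Sum.inl u)) :=
        ⟨by simp [redOwner], Sum.inr (Sum.inl u), rfl, ⟨u, hu, by simp [redLinks]⟩⟩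
      obtain ⟨q, hq, hfq⟩ := hf.2 _ _ hc
      match q with
      | Sum.inr (Sum.inl v) =>
        simp only [redOwner, Sum.inr.injEq, Sum.inl.injEq] at hq
        subst hq; exact hfq.symm
      | Sum.inl _ => simp [redOwner] at hq
      | Sum.inr (Sum.inr _) => simp [redOwner] at hq
  exact ⟨key, fun e => ⟨key _ _ (by simp [redLinks]), key _ _ (by simp [redLinks])⟩⟩
end
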